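/- arXiv:1706.00407 — 3 statements merged into one kernel-verified Lean document; each statement's English description precedes it below -/
import Mathlib

section
/- For all integers m and all positive integers n, F_m * (sum over k from 1 to n of (-1)^{mk-1} L_{2mk}) = (-1)^{mn-1} F_{mn} L_{mn+m}. -/
/-!
Binet: with `u = φ ^ m` and `v = ψ ^ m` one has `√5 F_{mk} = u ^ k - v ^ k`, `L_{mk} = u ^ k + v ^ k`
and `(-1) ^ (mk) = (u v) ^ k`. The identity thereby becomes a telescoping identity between
polynomials in `u` and `v`, valid in any commutative ring as soon as `(u v) ^ 2 = 1`.
-/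

/-- Fibonacci numbers extended to all integers via `F_{-n} = (-1)^{n-1} F_n`. -/
def fibZ (n : ℤ) : ℤ :=
  if 0 ≤ n then (Nat.fib n.toNat : ℤ) else (-1) ^ ((-n).toNat + 1) * (Nat.fib (-n).toNat : ℤ)

/-- Lucas numbers extended to all integers, `L_n = F_{n-1} + F_{n+1}`. -/
def lucasZ (n : ℤ) : ℤ := fibZ (n - 1) + fibZ (n + 1)

open Real Finset
open scoped goldenRatio

theorem fibZ_eq_fib (n : ℤ) : fibZ n = Int.fib n := by
  obtain ⟨k, rfl | rfl⟩ := n.eq_nat_or_neg <;> simp [fibZ, Int.fib_neg_natCast]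

theorem coe_fibZ_eq (n : ℤ) : (fibZ n : ℝ) = (φ ^ n - ψ ^ n) / √5 := by
  rw [fibZ_eq_fib, coe_intFib_eq]

theorem coe_lucasZ_eq (n : ℤ) : (lucasZ n : ℝ) = φ ^ n + ψ ^ n := by
  rw [lucasZ, Int.cast_add, coe_fibZ_eq, coe_fibZ_eq, ← add_div, div_eq_iff (by positivity),
    zpow_sub_one₀ goldenRatio_ne_zero, zpow_sub_one₀ goldenConj_ne_zero,
    zpow_add_one₀ goldenRatio_ne_zero, zpow_add_one₀ goldenConj_ne_zero,
    inv_goldenRatio, inv_goldenConj, ← goldenRatio_sub_goldenConj]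
  ring

theorem coe_neg_one_zpow (j : ℤ) : ((((-1 : ℤˣ) ^ j : ℤˣ) : ℤ) : ℝ) = (-1) ^ j := by
  rcases j.even_or_odd with h | h <;> simp [h.neg_one_zpow]

theorem sub_mul_sum_Icc_mul_pow_add_pow {R : Type*} [CommRing R] (u v : R)
    (huv : (u * v) ^ 2 = 1) (n : ℕ) :
    (u - v) * ∑ k ∈ Icc 1 n, (u * v) ^ k * (u ^ (2 * k) + v ^ (2 * k))
      = (u * v) ^ n * (u ^ n - v ^ n) * (u ^ (n + 1) + v ^ (n + 1)) := by
  induction n with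
  | zero => simp
  | succ n ih =>
    rw [sum_Icc_succ_top (by omega), mul_add, ih]
    linear_combination
      u ^ n * v ^ n * (v * v ^ (2 * n) - u * u ^ (2 * n) + (u - v) * u ^ n * v ^ n) * huv

theorem stmt7_general (m : ℤ) (n : ℕ) :
    fibZ m * ∑ k ∈ Finset.Icc 1 n, ((((-1 : ℤˣ) ^ (m * k - 1) : ℤˣ)) : ℤ) * lucasZ (2 * m * k)
      = ((((-1 : ℤˣ) ^ (m * n - 1) : ℤˣ)) : ℤ) * fibZ (m * n) * lucasZ (m * n + m) := by
  set u := φ ^ m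
  set v := ψ ^ m
  have huv : u * v = (-1) ^ m := by rw [← mul_zpow, goldenRatio_mul_goldenConj]
  have huv_sq : (u * v) ^ 2 = 1 := by
    rw [huv, ← zpow_natCast, ← zpow_mul, mul_comm, zpow_mul]
    simp
  have hpow (x : ℝ) (j : ℕ) : x ^ (m * j) = (x ^ m) ^ j := by rw [zpow_mul, zpow_natCast]
  have hsign (j : ℕ) : ((((-1 : ℤˣ) ^ (m * j - 1) : ℤˣ) : ℤ) : ℝ) = -(u * v) ^ j := by
    rw [coe_neg_one_zpow, zpow_sub_one₀ (by norm_num), hpow, ← huv]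
    simp
  have h2mk (k : ℕ) : 2 * m * k = m * (2 * k : ℕ) := by push_cast; ring
  have hmn : m * n + m = m * (n + 1 : ℕ) := by push_cast; ring
  apply Int.cast_injective (α := ℝ)
  simp only [Int.cast_mul, Int.cast_sum, hsign, h2mk, hmn, coe_fibZ_eq, coe_lucasZ_eq, hpow,
    neg_mul, sum_neg_distrib]
  linear_combination (-(√5)⁻¹) * sub_mul_sum_Icc_mul_pow_add_pow u v huv_sq n

theorem stmt7 (m : ℤ) (n : ℕ) (hn : 0 < n) :
    fibZ m * ∑ k ∈ Finset.Icc 1 n, ((((-1 : ℤˣ) ^ (m * k - 1) : ℤˣ)) : ℤ) * lucasZ (2 * m * k)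
      = ((((-1 : ℤˣ) ^ (m * n - 1) : ℤˣ)) : ℤ) * fibZ (m * n) * lucasZ (m * n + m) :=
  stmt7_general m n
end

section
/- For every nonzero integer m and every positive integer n, 25 * (sum over k from 1 to n of F_{mk}^4) = F_{2mn+m} (L_{2mn+m} + 4(-1)^{mn-1} L_m) / F_{2m} + 6n + 3. Equivalently (avoiding division), 25 F_{2m} * (sum over k from 1 to n of F_{mk}^4) = F_{2mn+m} (L_{2mn+m} + 4(-1)^{mn-1} L_m) + (6n+3) F_{2m}. -/
open Finset

def IsFibLike {R : Type*} [Ring R] (f : ℤ → R) : Prop :=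
  ∀ n, f (n + 2) = f (n + 1) + f n

namespace IsFibLike

variable {R : Type*} [Ring R] {f g : ℤ → R}

lemma add (hf : IsFibLike f) (hg : IsFibLike g) : IsFibLike fun n => f n + g n := fun n => by
  dsimp only; rw [hf, hg]; abel

lemma sub (hf : IsFibLike f) (hg : IsFibLike g) : IsFibLike fun n => f n - g n := fun n => by
  dsimp only; rw [hf, hg]; abel

lemma const_mul (hf : IsFibLike f) (c : R) : IsFibLike fun n => c * f n := fun n => by
  dsimp only; rw [hf, mul_add]

lemma mul_const (hf : IsFibLike f) (c : R) : IsFibLike fun n => f n * c := fun n => by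
  dsimp only; rw [hf, add_mul]

lemma comp_add (hf : IsFibLike f) (c : ℤ) : IsFibLike fun n => f (n + c) := fun n => by
  simpa only [add_right_comm n _ c] using hf (n + c)

lemma comp_sub (hf : IsFibLike f) (c : ℤ) : IsFibLike fun n => f (n - c) := by
  simpa only [sub_eq_add_neg] using hf.comp_add (-c)

theorem unique (hf : IsFibLike f) (hg : IsFibLike g) (h0 : f 0 = g 0) (h1 : f 1 = g 1) :
    ∀ n, f n = g n := by
  have key : ∀ n, f n = g n ∧ f (n + 1) = g (n + 1) := by
    intro n
    induction n using Int.induction_on with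
    | zero => exact ⟨h0, by simpa using h1⟩
    | succ k ih => exact ⟨ih.2, by rw [add_assoc, one_add_one_eq_two, hf, hg, ih.1, ih.2]⟩
    | pred k ih =>
      refine ⟨?_, by simpa using ih.1⟩
      have hfk := hf (-k - 1)
      have hgk := hg (-k - 1)
      rw [show -(k : ℤ) - 1 + 2 = -k + 1 by ring, sub_add_cancel] at hfk hgk
      rw [ih.1, ih.2] at hfk
      exact add_left_cancel (hfk.symm.trans hgk)
  exact fun n => (key n).1

end IsFibLike

lemma coe_negOnePow_mul_self (n : ℤ) : (n.negOnePow : ℤ) * n.negOnePow = 1 := by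
  rw [← Units.val_mul, Int.units_mul_self, Units.val_one]

lemma fibZ_natCast (k : ℕ) : fibZ k = Nat.fib k := by
  simp [fibZ]

lemma fibZ_neg_natCast (k : ℕ) : fibZ (-k) = (-1) ^ (k + 1) * Nat.fib k := by
  simp [fibZ]

lemma fibZ_neg (n : ℤ) : fibZ (-n) = -n.negOnePow * fibZ n := by
  have h (k : ℕ) : fibZ (-k) = -(k : ℤ).negOnePow * fibZ k := by
    rw [fibZ_neg_natCast, fibZ_natCast, Int.coe_negOnePow_natCast]; ring
  obtain ⟨k, rfl | rfl⟩ := Int.eq_nat_or_neg n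
  · exact h k
  · rw [neg_neg, Int.negOnePow_neg, h k]
    linear_combination (-fibZ k) * coe_negOnePow_mul_self k

lemma isFibLike_fibZ : IsFibLike fibZ := by
  intro n
  obtain ⟨k, rfl | rfl⟩ := Int.eq_nat_or_neg n
  · have := Nat.fib_add_two (n := k)
    rw [show (k : ℤ) + 2 = (k + 2 : ℕ) by push_cast; ring,
      show (k : ℤ) + 1 = (k + 1 : ℕ) by push_cast; ring, fibZ_natCast, fibZ_natCast, fibZ_natCast]
    push_cast [this]
    ring
  · match k with
    | 0 => decide
    | 1 => decide
    | j + 2 =>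
      rw [show -((j + 2 : ℕ) : ℤ) + 2 = -j by push_cast; ring,
        show -((j + 2 : ℕ) : ℤ) + 1 = -(j + 1 : ℕ) by push_cast; ring,
        fibZ_neg_natCast, fibZ_neg_natCast, fibZ_neg_natCast, Nat.fib_add_two]
      push_cast
      ring

lemma isFibLike_lucasZ : IsFibLike lucasZ :=
  (isFibLike_fibZ.comp_sub 1).add (isFibLike_fibZ.comp_add 1)

lemma lucasZ_neg (n : ℤ) : lucasZ (-n) = n.negOnePow * lucasZ n := by
  rw [lucasZ, lucasZ, show -n - 1 = -(n + 1) by ring, show -n + 1 = -(n - 1) by ring,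
    fibZ_neg, fibZ_neg, Int.negOnePow_succ, Int.negOnePow_sub, Int.negOnePow_one]
  push_cast
  ring

lemma fibZ_mul_lucasZ (a b : ℤ) :
    fibZ a * lucasZ b = fibZ (a + b) + b.negOnePow * fibZ (a - b) := by
  revert a
  apply IsFibLike.unique (isFibLike_fibZ.mul_const _)
    ((isFibLike_fibZ.comp_add b).add ((isFibLike_fibZ.comp_sub b).const_mul _))
  · rw [zero_add, zero_sub, fibZ_neg, show fibZ 0 = 0 by decide]
    linear_combination fibZ b * coe_negOnePow_mul_self b
  · rw [show (1 : ℤ) - b = -(b - 1) by ring, fibZ_neg, Int.negOnePow_sub, Int.negOnePow_one,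
      show fibZ 1 = 1 by decide, lucasZ, add_comm 1 b]
    push_cast
    linear_combination (-fibZ (b - 1)) * coe_negOnePow_mul_self b

lemma fibZ_mul_lucasZ_self (a : ℤ) : fibZ a * lucasZ a = fibZ (2 * a) := by
  rw [fibZ_mul_lucasZ, sub_self, show fibZ 0 = 0 by decide, two_mul]
  ring

lemma fibZ_two_mul_mul_lucasZ (m b : ℤ) :
    fibZ (2 * m) * lucasZ b = fibZ (b + 2 * m) - fibZ (b - 2 * m) := by
  rw [fibZ_mul_lucasZ, show 2 * m - b = -(b - 2 * m) by ring, fibZ_neg, Int.negOnePow_sub,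
    Int.negOnePow_two_mul, add_comm (2 * m) b]
  push_cast
  linear_combination (-fibZ (b - 2 * m)) * coe_negOnePow_mul_self b

lemma five_mul_fibZ (b : ℤ) : 5 * fibZ b = lucasZ (b + 1) + lucasZ (b - 1) := by
  revert b
  apply IsFibLike.unique (isFibLike_fibZ.const_mul 5)
    ((isFibLike_lucasZ.comp_add 1).add (isFibLike_lucasZ.comp_sub 1)) <;> decide

lemma five_mul_fibZ_mul_fibZ (a b : ℤ) :
    5 * fibZ a * fibZ b = lucasZ (a + b) - b.negOnePow * lucasZ (a - b) := by
  revert a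
  apply IsFibLike.unique ((isFibLike_fibZ.const_mul 5).mul_const _)
    ((isFibLike_lucasZ.comp_add b).sub ((isFibLike_lucasZ.comp_sub b).const_mul _))
  · rw [zero_add, zero_sub, lucasZ_neg, show fibZ 0 = 0 by decide]
    linear_combination lucasZ b * coe_negOnePow_mul_self b
  · rw [show (1 : ℤ) - b = -(b - 1) by ring, lucasZ_neg, Int.negOnePow_sub, Int.negOnePow_one,
      show fibZ 1 = 1 by decide, add_comm 1 b]
    push_cast
    linear_combination five_mul_fibZ b - lucasZ (b - 1) * coe_negOnePow_mul_self b

lemma lucasZ_mul_lucasZ (a b : ℤ) :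
    lucasZ a * lucasZ b = lucasZ (a + b) + b.negOnePow * lucasZ (a - b) := by
  revert a
  apply IsFibLike.unique (isFibLike_lucasZ.mul_const _)
    ((isFibLike_lucasZ.comp_add b).add ((isFibLike_lucasZ.comp_sub b).const_mul _))
  · rw [zero_add, zero_sub, lucasZ_neg, show lucasZ 0 = 2 by decide]
    linear_combination (-lucasZ b) * coe_negOnePow_mul_self b
  · have hrec := isFibLike_lucasZ (b - 1)
    rw [show b - 1 + 2 = b + 1 by ring, sub_add_cancel] at hrec
    rw [show (1 : ℤ) - b = -(b - 1) by ring, lucasZ_neg, Int.negOnePow_sub, Int.negOnePow_one,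
      show lucasZ 1 = 1 by decide, add_comm 1 b]
    push_cast
    linear_combination -hrec + lucasZ (b - 1) * coe_negOnePow_mul_self b

lemma fibZ_pow_four (j : ℤ) :
    25 * fibZ j ^ 4 = lucasZ (4 * j) - 4 * j.negOnePow * lucasZ (2 * j) + 6 := by
  have hF := five_mul_fibZ_mul_fibZ j j
  rw [← two_mul, sub_self, show lucasZ 0 = 2 by decide] at hF
  have hL := lucasZ_mul_lucasZ (2 * j) (2 * j)
  rw [← two_mul, ← mul_assoc, sub_self, show lucasZ 0 = 2 by decide, Int.negOnePow_two_mul] at hL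
  push_cast at hL
  linear_combination (5 * fibZ j ^ 2 + lucasZ (2 * j) - 2 * j.negOnePow) * hF + hL
    + 4 * coe_negOnePow_mul_self j

def quarticSumPrimitive (m j : ℤ) : ℤ :=
  fibZ (2 * j + m) * (lucasZ (2 * j + m) - 4 * j.negOnePow * lucasZ m)

lemma quarticSumPrimitive_zero (m : ℤ) : quarticSumPrimitive m 0 = -3 * fibZ (2 * m) := by
  rw [quarticSumPrimitive, mul_zero, zero_add, Int.negOnePow_zero, ← fibZ_mul_lucasZ_self]
  push_cast
  ring

lemma quarticSumPrimitive_add_sub (m j : ℤ) :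
    quarticSumPrimitive m (j + m) - quarticSumPrimitive m j
      = 25 * fibZ (2 * m) * fibZ (j + m) ^ 4 - 6 * fibZ (2 * m) := by
  have h4 := fibZ_pow_four (j + m)
  unfold quarticSumPrimitive
  rw [Int.negOnePow_add] at h4 ⊢
  push_cast at h4 ⊢
  linear_combination (norm := ring_nf) -fibZ (2 * m) * h4
    - fibZ_two_mul_mul_lucasZ m (4 * (j + m))
    + 4 * j.negOnePow * m.negOnePow * fibZ_two_mul_mul_lucasZ m (2 * (j + m))
    + fibZ_mul_lucasZ_self (2 * j + 3 * m) - fibZ_mul_lucasZ_self (2 * j + m)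
    - 4 * j.negOnePow * m.negOnePow * fibZ_mul_lucasZ (2 * j + 3 * m) m
    + 4 * j.negOnePow * fibZ_mul_lucasZ (2 * j + m) m
    - 4 * j.negOnePow * fibZ (2 * j + 2 * m) * coe_negOnePow_mul_self m

lemma sum_fibZ_pow_four (m : ℤ) (n : ℕ) :
    25 * fibZ (2 * m) * ∑ k ∈ Icc 1 n, fibZ (m * k) ^ 4
      = quarticSumPrimitive m (m * n) + (6 * n + 3) * fibZ (2 * m) := by
  induction n with
  | zero => simp [quarticSumPrimitive_zero]
  | succ n ih =>
    have hstep := quarticSumPrimitive_add_sub m (m * n)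
    rw [sum_Icc_succ_top (by omega), mul_add, ih]
    push_cast
    rw [mul_add_one]
    linear_combination -hstep

theorem stmt9_general (m : ℤ) (n : ℕ) :
    25 * fibZ (2 * m) * ∑ k ∈ Finset.Icc 1 n, fibZ (m * k) ^ 4
      = fibZ (2 * m * n + m) * (lucasZ (2 * m * n + m) + 4 * ((((-1 : ℤˣ) ^ (m * n - 1) : ℤˣ)) : ℤ) * lucasZ m)
        + (6 * n + 3) * fibZ (2 * m) := by
  rw [sum_fibZ_pow_four, quarticSumPrimitive, ← Int.negOnePow_def, Int.negOnePow_sub,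
    Int.negOnePow_one, mul_assoc 2 m]
  push_cast
  ring

theorem stmt9 (m : ℤ) (hm : m ≠ 0) (n : ℕ) (hn : 0 < n) :
    25 * fibZ (2 * m) * ∑ k ∈ Finset.Icc 1 n, fibZ (m * k) ^ 4
      = fibZ (2 * m * n + m) * (lucasZ (2 * m * n + m) + 4 * ((((-1 : ℤˣ) ^ (m * n - 1) : ℤˣ)) : ℤ) * lucasZ m)
        + (6 * n + 3) * fibZ (2 * m) :=
  stmt9_general m n
end

section
/- For every positive integer n, sum over k from 1 to n of (-1)^{k-1} F_k^4 equals (-1)^{n-1}/3 * F_n F_{n+1} F_{n-2} F_{n+3}. Equivalently, 3 * (sum over k from 1 to n of (-1)^{k-1} F_k^4) = (-1)^{n-1} F_n F_{n+1} F_{n-2} F_{n+3}. -/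
lemma fibZ_rec (m : ℤ) (h : -1 ≤ m) : fibZ (m + 2) = fibZ m + fibZ (m + 1) := by
  rcases eq_or_lt_of_le h with h1 | h1
  · subst h1; norm_num [fibZ]
  · have h0 : 0 ≤ m := by omega
    lift m to ℕ using h0
    simp only [fibZ, if_pos (by positivity : (0:ℤ) ≤ (m:ℤ) + 2),
      if_pos (by positivity : (0:ℤ) ≤ (m:ℤ)),
      if_pos (by positivity : (0:ℤ) ≤ (m:ℤ) + 1)]
    have e1 : ((m:ℤ) + 2).toNat = m + 2 := by omega
    have e2 : ((m:ℤ) + 1).toNat = m + 1 := by omega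
    have e3 : ((m:ℤ)).toNat = m := by omega
    rw [e1, e2, e3, Nat.fib_add_two]
    push_cast; ring

theorem stmt14 (n : ℕ) (hn : 0 < n) :
    3 * ∑ k ∈ Finset.Icc 1 n, (((-1 : ℤˣ) ^ ((k : ℤ) - 1) : ℤˣ) : ℤ) * fibZ k ^ 4
      = (((-1 : ℤˣ) ^ ((n : ℤ) - 1) : ℤˣ) : ℤ) * fibZ n * fibZ (n + 1) * fibZ ((n : ℤ) - 2)
          * fibZ (n + 3) := by
  induction n, hn using Nat.le_induction with
  | base => norm_num [fibZ, show ((2:ℤ)).toNat = 2 from rfl, show ((4:ℤ)).toNat = 4 from rfl]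
  | succ n hn ih =>
    rw [Finset.sum_Icc_succ_top (by omega : 1 ≤ n + 1)]
    set a := fibZ ((n:ℤ) - 1) with ha
    set b := fibZ (n:ℤ) with hb
    have hm2 : fibZ ((n:ℤ) - 2) = b - a := by
      have := fibZ_rec ((n:ℤ) - 2) (by omega)
      have e : (n:ℤ) - 2 + 2 = n := by ring
      have e' : (n:ℤ) - 2 + 1 = (n:ℤ) - 1 := by ring
      rw [e, e'] at this; rw [ha, hb]; linarith
    have hp1 : fibZ ((n:ℤ) + 1) = a + b := by
      have := fibZ_rec ((n:ℤ) - 1) (by omega)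
      have e : (n:ℤ) - 1 + 2 = (n:ℤ) + 1 := by ring
      have e' : (n:ℤ) - 1 + 1 = (n:ℤ) := by ring
      rw [e, e'] at this; rw [ha, hb]; linarith
    have hp2 : fibZ ((n:ℤ) + 2) = a + 2 * b := by
      have := fibZ_rec ((n:ℤ)) (by omega)
      have e : (n:ℤ) + 1 + 1 = (n:ℤ) + 2 := by ring
      rw [hp1] at this; linarith
    have hp3 : fibZ ((n:ℤ) + 3) = 2 * a + 3 * b := by
      have := fibZ_rec ((n:ℤ) + 1) (by omega)
      have e : (n:ℤ) + 1 + 2 = (n:ℤ) + 3 := by ring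
      have e' : (n:ℤ) + 1 + 1 = (n:ℤ) + 2 := by ring
      rw [e, e', hp1, hp2] at this; linarith
    have hp4 : fibZ ((n:ℤ) + 4) = 3 * a + 5 * b := by
      have := fibZ_rec ((n:ℤ) + 2) (by omega)
      have e : (n:ℤ) + 2 + 2 = (n:ℤ) + 4 := by ring
      have e' : (n:ℤ) + 2 + 1 = (n:ℤ) + 3 := by ring
      rw [e, e', hp2, hp3] at this; linarith
    have hsgn : (((-1 : ℤˣ) ^ (((n:ℕ)+1 : ℤ) - 1) : ℤˣ) : ℤ)
        = -(((-1 : ℤˣ) ^ ((n : ℤ) - 1) : ℤˣ) : ℤ) := by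
      have e : (((n:ℕ)+1 : ℤ) - 1) = ((n : ℤ) - 1) + 1 := by push_cast; ring
      rw [e, zpow_add_one, Units.val_mul]
      simp
    push_cast at hsgn ⊢
    rw [hsgn]
    have c1 : ((n:ℤ) + 1 + 1) = (n:ℤ) + 2 := by ring
    have c2 : ((n:ℤ) + 1 - 2) = (n:ℤ) - 1 := by ring
    have c3 : ((n:ℤ) + 1 + 3) = (n:ℤ) + 4 := by ring
    rw [c1, c2, c3, hp1, hp2, hp4, ← ha]
    rw [mul_add, ih, hm2, hp3, hp1]
    ring
end
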